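/- Let θ(z) = Θ_{½,½}(z). Then: (i) θ is odd, i.e. θ(−z) = −θ(z) for all z ∈ ℂ; (ii) if ϑ = Θ_{ε,ε'} satisfies ϑ(0) ≠ 0 and θ'(0) ≠ 0, then the chiral torus kernel has the near-diagonal expansion lim_{z→0, z≠0} [ ϑ(z)·θ'(0)/(ϑ(0)·θ(z)) − 1/z ] = ϑ'(0)/ϑ(0). (This identifies the constant term π r_χ = ϑ'(0)/ϑ(0) in the expansion S_χ(z,w) = 1/(π(z−w)) + r_χ + O(z−w) of the kernel inverting the twisted ∂̄ operator on the torus; note the oddness of θ is what kills the would-be extra term.) -/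

import Mathlib

/-!
Reindexing the series gives `Θ_{ε,ε'}(-z) = Θ_{-ε,-ε'}(z)`, and shifting the characteristics by
integers gives `Θ_{ε+1,ε'} = Θ_{ε,ε'}` and `Θ_{ε,ε'+1} = e^{2πiε} Θ_{ε,ε'}`; for `ε = ε' = ½` this
makes `θ` odd. Hence `θ(z) = z φ(z)` with `φ` even, so `φ(0) = θ'(0)` and `φ'(0) = 0`, and
`ϑ(z)θ'(0)/(ϑ(0)θ(z)) - 1/z = (slope ϑ 0 z · θ'(0) - ϑ(0) · slope φ 0 z) / (ϑ(0) φ(z))`,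
which tends to `(ϑ'(0)θ'(0) - 0) / (ϑ(0)θ'(0)) = ϑ'(0)/ϑ(0)`.
-/

open Filter Topology

/-- Theta function with characteristics:
`Θ_{ε,ε'}(z) = Σ_{n∈ℤ} exp(2πi(½τ(n+ε)² + (n+ε)(z+ε')))`. -/
noncomputable def Theta (τ : ℂ) (ε ε' : ℝ) (z : ℂ) : ℂ :=
  ∑' n : ℤ, Complex.exp (2 * (Real.pi : ℂ) * Complex.I *
    ((1 / 2) * τ * ((n : ℂ) + (ε : ℂ)) ^ 2 + ((n : ℂ) + (ε : ℂ)) * (z + (ε' : ℂ))))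

lemma Theta_neg (τ : ℂ) (ε ε' : ℝ) (z : ℂ) : Theta τ ε ε' (-z) = Theta τ (-ε) (-ε') z := by
  rw [Theta, Theta, ← (Equiv.neg ℤ).tsum_eq]
  refine tsum_congr fun n => ?_
  push_cast [Equiv.neg_apply]
  ring_nf

lemma Theta_add_one_left (τ : ℂ) (ε ε' : ℝ) (z : ℂ) : Theta τ (ε + 1) ε' z = Theta τ ε ε' z := by
  symm
  rw [Theta, Theta, ← (Equiv.addRight (1 : ℤ)).tsum_eq]
  refine tsum_congr fun n => ?_
  push_cast [Equiv.coe_addRight]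
  ring_nf

lemma Theta_add_one_right (τ : ℂ) (ε ε' : ℝ) (z : ℂ) :
    Theta τ ε (ε' + 1) z = Complex.exp (2 * Real.pi * Complex.I * ε) * Theta τ ε ε' z := by
  rw [Theta, Theta, ← tsum_mul_left]
  refine tsum_congr fun n => ?_
  rw [← Complex.exp_add, ← mul_one (Complex.exp (_ + _)), ← Complex.exp_int_mul_two_pi_mul_I n,
    ← Complex.exp_add]
  push_cast
  ring_nf

lemma Theta_half_half_odd (τ : ℂ) : (Theta τ (1 / 2) (1 / 2)).Odd := fun z => by
  have h := Theta_add_one_right τ (1 / 2) (-(1 / 2)) z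
  have hexp : Complex.exp (2 * Real.pi * Complex.I * ((1 / 2 : ℝ) : ℂ)) = -1 := by
    rw [← Complex.exp_pi_mul_I]
    push_cast
    ring_nf
  rw [show (-(1 / 2) + 1 : ℝ) = 1 / 2 by norm_num, hexp] at h
  rw [Theta_neg, h, ← Theta_add_one_left]
  norm_num

lemma Theta_eq_exp_mul_jacobiTheta₂ (τ : ℂ) (ε ε' : ℝ) (z : ℂ) :
    Theta τ ε ε' z =
      Complex.exp (2 * Real.pi * Complex.I * ((1 / 2) * τ * ε ^ 2 + ε * (z + ε'))) *
        jacobiTheta₂ (z + (ε' + ε * τ)) τ := by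
  rw [Theta, jacobiTheta₂, ← tsum_mul_left]
  refine tsum_congr fun n => ?_
  rw [jacobiTheta₂_term, ← Complex.exp_add]
  ring_nf

lemma differentiable_Theta (τ : ℂ) (hτ : 0 < τ.im) (ε ε' : ℝ) :
    Differentiable ℂ (Theta τ ε ε') := by
  have hθ : Differentiable ℂ fun z => jacobiTheta₂ (z + (ε' + ε * τ)) τ := fun z =>
    (differentiableAt_jacobiTheta₂_fst _ hτ).comp z (differentiableAt_id.add_const _)
  rw [funext (Theta_eq_exp_mul_jacobiTheta₂ τ ε ε')]
  exact (by fun_prop : Differentiable ℂ _).mul hθ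

lemma AnalyticAt.dslope {𝕜 E : Type*} [NontriviallyNormedField 𝕜] [NormedAddCommGroup E]
    [NormedSpace 𝕜 E] {f : 𝕜 → E} {a : 𝕜} (hf : AnalyticAt 𝕜 f a) :
    AnalyticAt 𝕜 (dslope f a) a :=
  let ⟨_, hp⟩ := hf
  ⟨_, hp.has_fpower_series_dslope_fslope⟩

section

variable {𝕜 : Type*} [NontriviallyNormedField 𝕜] [CharZero 𝕜]

lemma Function.Even.deriv_zero {f : 𝕜 → 𝕜} (hf : f.Even) : deriv f 0 = 0 := by
  have h := deriv_comp_neg f 0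
  rw [funext hf, neg_zero] at h
  exact CharZero.eq_neg_self_iff.mp h

lemma Function.Odd.even_dslope_zero {f : 𝕜 → 𝕜} (hf : f.Odd) : (dslope f 0).Even := by
  intro z
  rcases eq_or_ne z 0 with rfl | hz
  · rw [neg_zero]
  · rw [dslope_of_ne _ hz, dslope_of_ne _ (neg_ne_zero.mpr hz), slope_def_field,
      slope_def_field, hf, hf.map_zero]
    ring

theorem Function.Odd.tendsto_mul_deriv_div_sub_inv {θ ϑ : 𝕜 → 𝕜} (hodd : θ.Odd)
    (hθ : DifferentiableAt 𝕜 (dslope θ 0) 0) (hϑ : DifferentiableAt 𝕜 ϑ 0)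
    (hϑ0 : ϑ 0 ≠ 0) (hθ' : deriv θ 0 ≠ 0) :
    Tendsto (fun z => ϑ z * deriv θ 0 / (ϑ 0 * θ z) - 1 / z) (𝓝[≠] 0)
      (𝓝 (deriv ϑ 0 / ϑ 0)) := by
  set φ := dslope θ 0 with hφ_def
  have hφ0 : φ 0 = deriv θ 0 := dslope_same θ 0
  have hθφ : ∀ z ≠ 0, θ z = z * φ z := fun z hz => by
    rw [hφ_def, dslope_of_ne _ hz, slope_def_field, hodd.map_zero]
    field_simp
    ring
  have hslope_ϑ : Tendsto (slope ϑ 0) (𝓝[≠] 0) (𝓝 (deriv ϑ 0)) :=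
    hasDerivAt_iff_tendsto_slope.mp hϑ.hasDerivAt
  have hslope_φ : Tendsto (slope φ 0) (𝓝[≠] 0) (𝓝 0) :=
    hasDerivAt_iff_tendsto_slope.mp (hθ.hasDerivAt.congr_deriv hodd.even_dslope_zero.deriv_zero)
  have hφ : Tendsto φ (𝓝[≠] 0) (𝓝 (deriv θ 0)) :=
    hφ0 ▸ hθ.continuousAt.tendsto.mono_left nhdsWithin_le_nhds
  have hlim := ((hslope_ϑ.mul_const (deriv θ 0)).sub (hslope_φ.const_mul (ϑ 0))).div
    (hφ.const_mul (ϑ 0)) (mul_ne_zero hϑ0 hθ')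
  rw [mul_zero, sub_zero, mul_div_mul_right _ _ hθ'] at hlim
  refine hlim.congr' ?_
  filter_upwards [self_mem_nhdsWithin, hφ.eventually_ne hθ'] with z (hz : z ≠ 0) hφz
  rw [Pi.div_apply, hθφ z hz, slope_def_field, slope_def_field, hφ0]
  field_simp
  ring

end

/-- (i) `θ = Θ_{½,½}` is odd; (ii) if `ϑ = Θ_{ε,ε'}` has `ϑ(0) ≠ 0` and `θ'(0) ≠ 0`,
then the near-diagonal expansion of the chiral torus kernel holds:
`lim_{z→0} [ ϑ(z)θ'(0)/(ϑ(0)θ(z)) − 1/z ] = ϑ'(0)/ϑ(0)`. -/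
theorem stmt8 (τ : ℂ) (hτ : 0 < τ.im) (ε ε' : ℝ) :
    (∀ z : ℂ, Theta τ (1/2) (1/2) (-z) = -Theta τ (1/2) (1/2) z) ∧
    (Theta τ ε ε' 0 ≠ 0 → deriv (Theta τ (1/2) (1/2)) 0 ≠ 0 →
      Tendsto
        (fun z : ℂ =>
          Theta τ ε ε' z * deriv (Theta τ (1/2) (1/2)) 0 /
              (Theta τ ε ε' 0 * Theta τ (1/2) (1/2) z) -
            1 / z)
        (𝓝[≠] 0) (𝓝 (deriv (Theta τ ε ε') 0 / Theta τ ε ε' 0))) :=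
  ⟨Theta_half_half_odd τ, fun hϑ0 hθ' =>
    (Theta_half_half_odd τ).tendsto_mul_deriv_div_sub_inv
      ((differentiable_Theta τ hτ _ _).analyticAt 0).dslope.differentiableAt
      (differentiable_Theta τ hτ ε ε' 0) hϑ0 hθ'⟩
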